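/- arXiv:1911.03569 — 6 statements merged into one kernel-verified Lean document; each statement's English description precedes it below -/
import Mathlib

section
/- Let V ⊆ 𝕜^E be a linear subspace over a field 𝕜, with E finite. Then the function r : 2^E → ℤ≥0 defined by r(S) = dim(𝕜^S / (V ∩ 𝕜^S)) (where 𝕜^S is the subspace of vectors supported on S) is the rank function of a matroid on E. -/
/-- A function `r : Finset E → ℕ` is the rank function of a matroid on `E`. -/
def IsRankFn {E : Type*} [DecidableEq E] (r : Finset E → ℕ) : Prop :=
  r ∅ = 0 ∧
  (∀ S T : Finset E, r (S ∪ T) + r (S ∩ T) ≤ r S + r T) ∧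
  (∀ (S : Finset E) (x : E), x ∉ S → r S ≤ r (insert x S) ∧ r (insert x S) ≤ r S + 1)

/-- `𝕜^S`: the subspace of `E → 𝕜` consisting of vectors vanishing outside `S`. -/
def coordSubmodule (𝕜 : Type*) [Field 𝕜] {E : Type*} (S : Finset E) :
    Submodule 𝕜 (E → 𝕜) :=
  Submodule.pi {e | e ∉ S} (fun _ => ⊥)

/-- The rank function of the tropicalization of a subspace `V ⊆ 𝕜^E`:
`r(S) = dim (𝕜^S / (V ∩ 𝕜^S))`. -/
noncomputable def tropRank (𝕜 : Type*) [Field 𝕜] {E : Type*}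
    (V : Submodule 𝕜 (E → 𝕜)) (S : Finset E) : ℕ :=
  Module.finrank 𝕜
    (↥(coordSubmodule 𝕜 S) ⧸ Submodule.comap (coordSubmodule 𝕜 S).subtype V)

/-!
The vectors `fₑ = [eₑ] ∈ 𝕜^E / V` form a vector configuration, and `r(S)` is the dimension of
the span of `{fₑ | e ∈ S}`: indeed `𝕜^S` is spanned by the unit vectors `eₑ`, `e ∈ S`, and
`𝕜^S / (V ∩ 𝕜^S)` is the image of `𝕜^S` in `𝕜^E / V`. The rank function of any vector
configuration satisfies the matroid axioms, submodularity being the dimension formula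
`dim (A + B) + dim (A ∩ B) = dim A + dim B`.
-/

open Submodule Module

theorem isRankFn_finrank_span_image {K M E : Type*} [Field K] [AddCommGroup M] [Module K M]
    [DecidableEq E] [DecidableEq M] (f : E → M) :
    IsRankFn fun S : Finset E => finrank K (span K (S.image f : Set M)) := by
  refine ⟨?_, fun S T => ?_, fun S x _ => ⟨?_, ?_⟩⟩ <;> dsimp only
  · rw [Finset.image_empty, Finset.coe_empty, span_empty, finrank_bot]
  · have h_union : span K ((S ∪ T).image f : Set M)
        = span K (S.image f : Set M) ⊔ span K (T.image f : Set M) := by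
      rw [Finset.image_union, Finset.coe_union, span_union]
    have h_inter : span K ((S ∩ T).image f : Set M)
        ≤ span K (S.image f : Set M) ⊓ span K (T.image f : Set M) :=
      le_inf (span_mono (by gcongr; exact Finset.inter_subset_left))
        (span_mono (by gcongr; exact Finset.inter_subset_right))
    rw [h_union, ← finrank_sup_add_finrank_inf_eq (span K (S.image f : Set M))]
    exact Nat.add_le_add_left (finrank_mono h_inter) _
  · exact finrank_mono (span_mono (by gcongr; exact Finset.subset_insert x S))
  · rw [Finset.image_insert, Finset.coe_insert, span_insert]
    calc finrank K ↥(K ∙ f x ⊔ span K (S.image f : Set M))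
        ≤ finrank K (K ∙ f x) + finrank K (span K (S.image f : Set M)) :=
          finrank_add_le_finrank_add_finrank _ _
      _ ≤ finrank K (span K (S.image f : Set M)) + 1 := by
          have h_singleton : finrank K (K ∙ f x) ≤ 1 :=
            (finrank_span_le_card ({f x} : Set M)).trans (by simp)
          omega

section coordSubmodule

variable {𝕜 E : Type*} [Field 𝕜]

theorem mem_coordSubmodule {S : Finset E} {v : E → 𝕜} :
    v ∈ coordSubmodule 𝕜 S ↔ ∀ e ∉ S, v e = 0 := by
  simp [coordSubmodule, mem_pi]

theorem coordSubmodule_eq_span_single [DecidableEq E] (S : Finset E) :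
    coordSubmodule 𝕜 S = span 𝕜 ((fun e => Pi.single e (1 : 𝕜)) '' S) := by
  refine le_antisymm (fun v hv => ?_) (span_le.2 ?_)
  · have h_sum : ∑ e ∈ S, v e • Pi.single e (1 : 𝕜) = v := by
      ext i
      by_cases hi : i ∈ S <;> simp [Finset.sum_apply, Pi.single_apply, hi,
        mem_coordSubmodule.1 hv i]
    rw [← h_sum]
    exact sum_mem fun e he => smul_mem _ _ (subset_span (Set.mem_image_of_mem _ he))
  · simp only [Set.image_subset_iff]
    intro e he
    exact mem_coordSubmodule.2 fun i hi => Pi.single_eq_of_ne (by rintro rfl; exact hi he) 1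

end coordSubmodule

theorem finrank_quotient_comap_subtype {K M : Type*} [Field K] [AddCommGroup M] [Module K M]
    (p V : Submodule K M) :
    finrank K (p ⧸ comap p.subtype V) = finrank K (map V.mkQ p) := by
  have h_ker : LinearMap.ker (V.mkQ ∘ₗ p.subtype) = comap p.subtype V := by
    rw [LinearMap.ker_comp, ker_mkQ]
  have h_range : LinearMap.range (V.mkQ ∘ₗ p.subtype) = map V.mkQ p := by
    rw [LinearMap.range_comp, range_subtype]
  rw [← h_ker, ← h_range]
  exact (V.mkQ ∘ₗ p.subtype).quotKerEquivRange.finrank_eq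

theorem tropRank_eq_finrank_span {𝕜 E : Type*} [Field 𝕜] [DecidableEq E]
    (V : Submodule 𝕜 (E → 𝕜)) (S : Finset E) :
    tropRank 𝕜 V S = finrank 𝕜 (span 𝕜 ((fun e => V.mkQ (Pi.single e 1)) '' S)) := by
  rw [tropRank, finrank_quotient_comap_subtype, coordSubmodule_eq_span_single, map_span,
    Set.image_image]

theorem stmt1_general {𝕜 : Type*} [Field 𝕜] {E : Type*} [DecidableEq E]
    (V : Submodule 𝕜 (E → 𝕜)) :
    IsRankFn (tropRank 𝕜 V) := by
  classical
  have h_tropRank : tropRank 𝕜 V = fun S : Finset E =>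
      finrank 𝕜 (span 𝕜 (S.image fun e => V.mkQ (Pi.single e 1) : Set ((E → 𝕜) ⧸ V))) :=
    funext fun S => by rw [tropRank_eq_finrank_span, Finset.coe_image]
  rw [h_tropRank]
  exact isRankFn_finrank_span_image _

/-- For a subspace `V ⊆ 𝕜^E` with `E` finite, `S ↦ dim(𝕜^S/(V ∩ 𝕜^S))`
is the rank function of a matroid on `E`. -/
theorem stmt1 {𝕜 : Type*} [Field 𝕜] {E : Type*} [Fintype E] [DecidableEq E]
    (V : Submodule 𝕜 (E → 𝕜)) :
    IsRankFn (tropRank 𝕜 V) :=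
  stmt1_general V
end

section
/- Let k ≥ 1 and d ≥ k, and let f ∈ ℂ[x,y] be a nonzero homogeneous polynomial of degree k with f(1,0) ≠ 0 and f(0,1) ≠ 0. Then the ideal (f) contains a polynomial of the form c₁x^d + c₂y^d with (c₁,c₂) ≠ (0,0) if and only if the roots of f(x,1) (counted as a multiset) are k distinct complex numbers z₁,…,z_k such that (z_i/z_j)^d = 1 for all i, j (i.e., they are distinct vertices of a regular d-gon centered at 0). -/
/-!
Put `g(x) = f(x, 1)`. Since `f` is homogeneous with `f(1,0) ≠ 0 ≠ f(0,1)`, `g` has degree `k`,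
nonzero constant term and homogenizes back to `f`, and `f ∣ c₁x^d + c₂y^d` gives
`g ∣ c₁X^d + c₂`. Evaluating at a (necessarily nonzero) root of `g` shows that this is
`c₁(X^d - w)` with `c₁ ≠ 0 ≠ w`. As `X^d - w` is separable, `g` has `k` distinct roots,
all of them `d`-th roots of `w`. Conversely, distinct `d`-th roots of `w` give pairwise
coprime factors `X - zᵢ` of `X^d - w`, and homogenizing this divisibility gives
`f ∣ x^d - w y^d`.
-/

open MvPolynomial

namespace Multiset

theorem exists_fin_injective_map_eq_of_nodup {α : Type*} {m : Multiset α} {k : ℕ}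
    (hm : m.Nodup) (hk : card m = k) :
    ∃ z : Fin k → α, Function.Injective z ∧ Finset.univ.val.map z = m := by
  obtain ⟨l, rfl⟩ : ∃ l : List α, (l : Multiset α) = m := Quot.exists_rep m
  rw [coe_card] at hk
  subst hk
  refine ⟨l.get, List.nodup_iff_injective_get.mp hm, ?_⟩
  rw [Fin.univ_val_map, List.ofFn_get]

end Multiset

namespace Polynomial

variable {R : Type*} [CommSemiring R]

theorem eval_homogenize_one_zero (p : R[X]) (n : ℕ) :
    MvPolynomial.eval ![1, 0] (p.homogenize n) = p.coeff n := by
  simp only [homogenize, map_sum, MvPolynomial.eval_monomial]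
  rw [Finset.sum_eq_single_of_mem (n, 0) (by simp)]
  · simp
  · rintro ⟨a, b⟩ hab hne
    have hb : b ≠ 0 := by rintro rfl; simp_all
    simp [hb]

theorem eval_homogenize_zero_one (p : R[X]) (n : ℕ) :
    MvPolynomial.eval ![0, 1] (p.homogenize n) = p.coeff 0 := by
  simp only [homogenize, map_sum, MvPolynomial.eval_monomial]
  rw [Finset.sum_eq_single_of_mem (0, n) (by simp)]
  · simp
  · rintro ⟨a, b⟩ hab hne
    have ha : a ≠ 0 := by rintro rfl; simp_all
    simp [ha]

theorem homogenize_prod_X_sub_C {R : Type*} [CommRing R] {ι : Type*} (s : Finset ι)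
    (z : ι → R) :
    (∏ i ∈ s, (X - C (z i))).homogenize s.card =
      ∏ i ∈ s, (MvPolynomial.X 0 - MvPolynomial.C (z i) * MvPolynomial.X 1) := by
  have h := homogenize_finsetProd (s := s) (p := fun i => X - C (z i)) (n := fun _ => 1)
    (fun i _ => natDegree_X_sub_C_le (z i))
  simpa using h

end Polynomial

namespace MvPolynomial

variable {R : Type*} [CommSemiring R]

noncomputable def dehomogenize : MvPolynomial (Fin 2) R →ₐ[R] Polynomial R :=
  aeval ![Polynomial.X, 1]

@[simp]
theorem dehomogenize_C (c : R) : dehomogenize (C c) = Polynomial.C c :=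
  aeval_C _ _

@[simp]
theorem dehomogenize_X_zero : dehomogenize (X 0 : MvPolynomial (Fin 2) R) = Polynomial.X :=
  aeval_X _ _

@[simp]
theorem dehomogenize_X_one : dehomogenize (X 1 : MvPolynomial (Fin 2) R) = 1 :=
  aeval_X _ _

variable {f : MvPolynomial (Fin 2) R} {n : ℕ}

theorem IsHomogeneous.homogenize_dehomogenize (hf : f.IsHomogeneous n) :
    (dehomogenize f).homogenize n = f :=
  Polynomial.homogenize_eq_of_isHomogeneous hf rfl

theorem IsHomogeneous.coeff_dehomogenize_self (hf : f.IsHomogeneous n) :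
    (dehomogenize f).coeff n = eval ![1, 0] f := by
  rw [← Polynomial.eval_homogenize_one_zero, hf.homogenize_dehomogenize]

theorem IsHomogeneous.coeff_zero_dehomogenize (hf : f.IsHomogeneous n) :
    (dehomogenize f).coeff 0 = eval ![0, 1] f := by
  rw [← Polynomial.eval_homogenize_zero_one _ n, hf.homogenize_dehomogenize]

theorem IsHomogeneous.natDegree_dehomogenize_le (hf : f.IsHomogeneous n) :
    (dehomogenize f).natDegree ≤ n := by
  rw [f.as_sum, map_sum]
  refine Polynomial.natDegree_sum_le_of_forall_le _ _ fun m hm => ?_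
  have hm : m 0 + m 1 = n := by
    simpa [Finsupp.weight_apply, Finsupp.sum_fintype] using hf (mem_support_iff.mp hm)
  rw [dehomogenize, aeval_monomial, Finsupp.prod_fintype _ _ (by simp), Fin.prod_univ_two]
  simp only [Matrix.cons_val_zero, Matrix.cons_val_one, one_pow, mul_one]
  exact (Polynomial.natDegree_C_mul_X_pow_le _ _).trans (by omega)

theorem IsHomogeneous.natDegree_dehomogenize (hf : f.IsHomogeneous n)
    (h10 : eval ![1, 0] f ≠ 0) :
    (dehomogenize f).natDegree = n :=
  le_antisymm hf.natDegree_dehomogenize_le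
    (Polynomial.le_natDegree_of_ne_zero (by rwa [hf.coeff_dehomogenize_self]))

end MvPolynomial

namespace Polynomial

variable {K : Type*} [Field K]

theorem prod_X_sub_C_dvd_X_pow_sub_C {ι : Type*} [Fintype ι] {z : ι → K}
    (hz : Function.Injective z) {d : ℕ} {w : K} (hzw : ∀ i, z i ^ d = w) :
    ∏ i, (X - C (z i)) ∣ X ^ d - C w :=
  Finset.prod_dvd_of_coprime (fun i _ j _ hij => pairwise_coprime_X_sub_C hz hij) fun i _ =>
    dvd_iff_isRoot.mpr (by simp [hzw])

theorem exists_dvd_X_pow_sub_C_of_dvd_C_mul_X_pow_add_C {g : K[X]} {x : K} (hx : g.IsRoot x)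
    (hx0 : x ≠ 0) {d : ℕ} {a b : K} (hab : (a, b) ≠ (0, 0)) (h : g ∣ C a * X ^ d + C b) :
    ∃ w ≠ 0, g ∣ X ^ d - C w := by
  have hxab : a * x ^ d + b = 0 := by simpa using eval_eq_zero_of_dvd_of_eval_eq_zero h hx
  have ha : a ≠ 0 := by
    rintro rfl
    exact hab (by simp_all)
  refine ⟨x ^ d, pow_ne_zero d hx0, h.trans ⟨C a⁻¹, ?_⟩⟩
  have haa : C a * C a⁻¹ = (1 : K[X]) := by rw [← C_mul, mul_inv_cancel₀ ha, C_1]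
  rw [eq_neg_of_add_eq_zero_right hxab, map_neg, map_mul]
  linear_combination (C (x ^ d) - X ^ d) * haa

theorem exists_eq_C_mul_prod_of_dvd_X_pow_sub_C [IsAlgClosed K] {g : K[X]} {d k : ℕ}
    (hd : (d : K) ≠ 0) {w : K} (hw : w ≠ 0) (hgk : g.natDegree = k) (h : g ∣ X ^ d - C w) :
    ∃ z : Fin k → K, Function.Injective z ∧ (∀ i, z i ^ d = w) ∧
      g = C g.leadingCoeff * ∏ i, (X - C (z i)) := by
  have hsep : g.Separable := (separable_X_pow_sub_C w hd hw).of_dvd h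
  have hg : g ≠ 0 := hsep.ne_zero
  obtain ⟨z, hz, hzroots⟩ := Multiset.exists_fin_injective_map_eq_of_nodup (nodup_roots hsep)
    (by rw [← (IsAlgClosed.splits g).natDegree_eq_card_roots, hgk])
  refine ⟨z, hz, fun i => ?_, ?_⟩
  · have hroot : g.IsRoot (z i) :=
      (mem_roots hg).mp (hzroots ▸ Multiset.mem_map_of_mem z (Finset.mem_univ i))
    simpa [sub_eq_zero] using eval_eq_zero_of_dvd_of_eval_eq_zero h hroot
  · conv_lhs => rw [(IsAlgClosed.splits g).eq_prod_roots, ← hzroots, Multiset.map_map]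
    rfl

end Polynomial

namespace MvPolynomial

variable {K : Type*} [Field K]

theorem prod_X_sub_C_mul_X_dvd_X_pow_sub_C_mul_X_pow {ι : Type*} [Fintype ι] {z : ι → K}
    (hz : Function.Injective z) {d : ℕ} {w : K} (hzw : ∀ i, z i ^ d = w) :
    ∏ i, (X 0 - C (z i) * X 1) ∣ (X 0 ^ d - C w * X 1 ^ d : MvPolynomial (Fin 2) K) := by
  have h := Polynomial.homogenize_dvd (Polynomial.prod_X_sub_C_dvd_X_pow_sub_C hz hzw)
  rwa [Polynomial.natDegree_X_pow_sub_C, Polynomial.natDegree_finsetProd_X_sub_C_eq_card,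
    Polynomial.homogenize_prod_X_sub_C, Polynomial.homogenize_sub,
    Polynomial.homogenize_X_pow le_rfl, Polynomial.homogenize_C, Nat.sub_self, pow_zero,
    mul_one] at h

theorem IsHomogeneous.exists_eq_C_mul_prod_of_dvd_C_mul_X_pow_add_C_mul_X_pow [IsAlgClosed K]
    {f : MvPolynomial (Fin 2) K} {k d : ℕ} (hf : f.IsHomogeneous k) (hk : 0 < k)
    (hd : (d : K) ≠ 0) (h10 : eval ![1, 0] f ≠ 0) (h01 : eval ![0, 1] f ≠ 0) {a b : K}
    (hab : (a, b) ≠ (0, 0)) (h : f ∣ C a * X 0 ^ d + C b * X 1 ^ d) :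
    ∃ w ≠ 0, ∃ z : Fin k → K, Function.Injective z ∧ (∀ i, z i ^ d = w) ∧
      f = C (eval ![1, 0] f) * ∏ i, (X 0 - C (z i) * X 1) := by
  have hgk : (dehomogenize f).natDegree = k := hf.natDegree_dehomogenize h10
  obtain ⟨x, hx⟩ := IsAlgClosed.exists_root (dehomogenize f)
    (Polynomial.natDegree_pos_iff_degree_pos.mp (by omega)).ne'
  have hx0 : x ≠ 0 := by
    rintro rfl
    exact h01 (by rwa [← hf.coeff_zero_dehomogenize, Polynomial.coeff_zero_eq_eval_zero])
  obtain ⟨w, hw, hgw⟩ := Polynomial.exists_dvd_X_pow_sub_C_of_dvd_C_mul_X_pow_add_C hx hx0 hab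
    (by simpa using map_dvd dehomogenize h)
  obtain ⟨z, hz, hzw, hgz⟩ := Polynomial.exists_eq_C_mul_prod_of_dvd_X_pow_sub_C hd hw hgk hgw
  refine ⟨w, hw, z, hz, hzw, ?_⟩
  conv_lhs => rw [← hf.homogenize_dehomogenize, hgz, Polynomial.homogenize_C_mul]
  rw [Polynomial.leadingCoeff, hgk, hf.coeff_dehomogenize_self]
  congr 1
  simpa using Polynomial.homogenize_prod_X_sub_C Finset.univ z

end MvPolynomial

theorem stmt8_general (k d : ℕ) (hk : 1 ≤ k) (hd : k ≤ d)
    (f : MvPolynomial (Fin 2) ℂ) (hf : f.IsHomogeneous k)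
    (h10 : MvPolynomial.eval (![1, 0] : Fin 2 → ℂ) f ≠ 0)
    (h01 : MvPolynomial.eval (![0, 1] : Fin 2 → ℂ) f ≠ 0) :
    (∃ c₁ c₂ : ℂ, (c₁, c₂) ≠ ((0 : ℂ), (0 : ℂ)) ∧
        (C c₁ * X 0 ^ d + C c₂ * X 1 ^ d) ∈ Ideal.span {f}) ↔
    (∃ z : Fin k → ℂ, Function.Injective z ∧ (∀ i j, (z i / z j) ^ d = 1) ∧
        ∃ c : ℂ, c ≠ 0 ∧ f = C c * ∏ i : Fin k, (X 0 - C (z i) * X 1)) := by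
  constructor
  · rintro ⟨c₁, c₂, hc, hmem⟩
    obtain ⟨w, hw, z, hz, hzw, hfz⟩ :=
      hf.exists_eq_C_mul_prod_of_dvd_C_mul_X_pow_add_C_mul_X_pow hk
        (Nat.cast_ne_zero.mpr (by omega)) h10 h01 hc (Ideal.mem_span_singleton.mp hmem)
    exact ⟨z, hz, fun i j => by rw [div_pow, hzw, hzw, div_self hw], _, h10, hfz⟩
  · rintro ⟨z, hz, hzd, c, hc, rfl⟩
    have hz0 : ∀ j, z j ≠ 0 := fun j h => by
      simpa [h, zero_pow (by omega : d ≠ 0)] using hzd j j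
    have hzw : ∀ i, z i ^ d = z ⟨0, hk⟩ ^ d := fun i =>
      (div_eq_one_iff_eq (pow_ne_zero _ (hz0 _))).mp (by rw [← div_pow]; exact hzd i _)
    refine ⟨1, -z ⟨0, hk⟩ ^ d, by simp, Ideal.mem_span_singleton.mpr ?_⟩
    refine ((IsUnit.mk0 c hc).map C).mul_left_dvd.mpr ?_
    simpa [sub_eq_add_neg] using prod_X_sub_C_mul_X_dvd_X_pow_sub_C_mul_X_pow hz hzw

/-- Let `k ≥ 1`, `d ≥ k`, and let `f ∈ ℂ[x,y]` be a nonzero homogeneous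
polynomial of degree `k` with `f(1,0) ≠ 0` and `f(0,1) ≠ 0`. Then `(f)` contains a
polynomial `c₁x^d + c₂y^d` with `(c₁,c₂) ≠ (0,0)` if and only if the roots of `f(x,1)`
are `k` distinct complex numbers `z₁,…,z_k` with `(z_i/z_j)^d = 1` for all `i,j`
(i.e. `f = c·∏(x - z_i y)` with the `z_i` distinct vertices of a regular `d`-gon
centered at `0`). -/
theorem stmt8 (k d : ℕ) (hk : 1 ≤ k) (hd : k ≤ d)
    (f : MvPolynomial (Fin 2) ℂ) (hf0 : f ≠ 0) (hf : f.IsHomogeneous k)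
    (h10 : MvPolynomial.eval (![1, 0] : Fin 2 → ℂ) f ≠ 0)
    (h01 : MvPolynomial.eval (![0, 1] : Fin 2 → ℂ) f ≠ 0) :
    (∃ c₁ c₂ : ℂ, (c₁, c₂) ≠ ((0 : ℂ), (0 : ℂ)) ∧
        (C c₁ * X 0 ^ d + C c₂ * X 1 ^ d) ∈ Ideal.span {f}) ↔
    (∃ z : Fin k → ℂ, Function.Injective z ∧ (∀ i j, (z i / z j) ^ d = 1) ∧
        ∃ c : ℂ, c ≠ 0 ∧ f = C c * ∏ i : Fin k, (X 0 - C (z i) * X 1)) :=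
  stmt8_general k d hk hd f hf h10 h01
end

section
/- Let k ≥ 1, d ≥ k, and let z₁, …, z_k be distinct nonzero complex numbers that are d-th roots of a common nonzero complex number c (i.e., z_i^d = c for all i). Then the complete homogeneous symmetric polynomial h_j(z₁,…,z_k) vanishes for every j with d−k+1 ≤ j ≤ d−1. -/
/-!
The generating function `∑ⱼ hⱼ(z) tʲ` is `∏ᵢ (1 - zᵢ t)⁻¹`. The `1 / zᵢ` are `k` distinct roots of
`1 - c tᵈ`, so `1 - c tᵈ = (∏ᵢ (1 - zᵢ t)) * Q` with `deg Q = d - k`. Hence the generating function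
is `Q * (1 + c tᵈ + c² t²ᵈ + ⋯)`, whose coefficients in degrees `d - k < j < d` are those of `Q`,
i.e. zero.
-/

open Finset
open scoped Polynomial PowerSeries

namespace PowerSeries

variable {R : Type*}

theorem coeff_prod_fin [CommSemiring R] {k : ℕ} (f : Fin k → R⟦X⟧) (n : ℕ) :
    coeff n (∏ i, f i) = ∑ μ ∈ Nat.antidiagonalTuple k n, ∏ i, coeff (μ i) (f i) := by
  classical
  rw [coeff_prod]
  exact sum_equiv Finsupp.equivFunOnFinite (by simp [Finset.Nat.mem_antidiagonalTuple]) (by simp)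

theorem mk_pow_mul_one_sub_C_mul_X [CommRing R] (a : R) :
    mk (a ^ ·) * (1 - C a * X) = 1 := by
  simpa [rescale_mk] using congrArg (rescale a) (mk_one_mul_one_sub_eq_one R)

theorem prod_mk_pow_mul_prod_one_sub_C_mul_X [CommRing R] {ι : Type*} (s : Finset ι)
    (z : ι → R) : (∏ i ∈ s, mk (z i ^ ·)) * ∏ i ∈ s, (1 - C (z i) * X) = 1 := by
  rw [← prod_mul_distrib]
  exact prod_eq_one fun i _ => mk_pow_mul_one_sub_C_mul_X (z i)

theorem coeff_eq_zero_of_mul_eq_one_of_mul_eq_one_sub_C_mul_X_pow [CommRing R]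
    {F : R⟦X⟧} {P Q : R[X]} {c : R} {d j : ℕ} (hF : F * P = 1)
    (hPQ : P * Q = 1 - Polynomial.C c * Polynomial.X ^ d) (hQ : Q.natDegree < j) (hjd : j < d) :
    coeff j F = 0 := by
  have hFQ : F * (1 - C c * X ^ d) = (Q : R⟦X⟧) := by
    have := congrArg (fun p : R[X] => F * (p : R⟦X⟧)) hPQ
    simp only [Polynomial.coe_mul, Polynomial.coe_sub, Polynomial.coe_one, Polynomial.coe_C,
      Polynomial.coe_pow, Polynomial.coe_X, ← mul_assoc, hF, one_mul] at this
    exact this.symm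
  calc coeff j F = coeff j (F * (1 - C c * X ^ d)) := by
        rw [mul_sub, mul_one, map_sub, mul_left_comm, coeff_C_mul, coeff_mul_X_pow',
          if_neg (by omega), mul_zero, sub_zero]
    _ = 0 := by rw [hFQ, Polynomial.coeff_coe, Polynomial.coeff_eq_zero_of_natDegree_lt hQ]

end PowerSeries

theorem isCoprime_one_sub_mul_one_sub_mul {R : Type*} [CommRing R] {a b : R} (x : R)
    (h : IsUnit (b - a)) : IsCoprime (1 - a * x) (1 - b * x) := by
  obtain ⟨u, hu⟩ := h
  refine ⟨↑u⁻¹ * b, -(↑u⁻¹ * a), ?_⟩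
  linear_combination (↑u⁻¹ : R) * hu.symm + u.inv_mul

namespace Polynomial

variable {K ι : Type*} [Field K]

theorem prod_one_sub_C_mul_X_dvd (s : Finset ι) {z : ι → K} (hz : Function.Injective z)
    {c : K} {d : ℕ} (hzc : ∀ i, z i ^ d = c) :
    ∏ i ∈ s, (1 - C (z i) * X) ∣ 1 - C c * X ^ d := by
  refine Finset.prod_dvd_of_coprime (fun i _ j _ hij => ?_) (fun i _ => ?_)
  · refine isCoprime_one_sub_mul_one_sub_mul X ?_
    rw [← C_sub]
    exact isUnit_C.mpr (sub_ne_zero.mpr (hz.ne hij).symm).isUnit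
  · rw [← hzc i, C_pow, ← mul_pow]
    exact one_sub_dvd_one_sub_pow _ d

theorem natDegree_prod_one_sub_C_mul_X (s : Finset ι) {z : ι → K} (hz : ∀ i ∈ s, z i ≠ 0) :
    (∏ i ∈ s, (1 - C (z i) * X)).natDegree = s.card := by
  have hdeg : ∀ i ∈ s, (1 - C (z i) * X).natDegree = 1 := fun i hi => by
    compute_degree!
    exact hz i hi
  rw [natDegree_prod _ _ fun i hi => ne_zero_of_natDegree_gt (hdeg i hi).symm.le]
  simp [Finset.sum_congr rfl hdeg]

end Polynomial

theorem stmt9_general (k d : ℕ)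
    (c : ℂ) (hc : c ≠ 0) (z : Fin k → ℂ) (hinj : Function.Injective z)
    (hz : ∀ i, z i ^ d = c)
    (j : ℕ) (hj1 : d - k + 1 ≤ j) (hj2 : j ≤ d - 1) :
    ∑ μ ∈ Finset.Nat.antidiagonalTuple k j, ∏ i : Fin k, z i ^ μ i = 0 := by
  have hd0 : d ≠ 0 := by omega
  have hz0 (i : Fin k) : z i ≠ 0 := fun h => hc (by rw [← hz i, h, zero_pow hd0])
  set P : ℂ[X] := ∏ i, (1 - Polynomial.C (z i) * Polynomial.X)
  obtain ⟨Q, hPQ⟩ := Polynomial.prod_one_sub_C_mul_X_dvd univ hinj hz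
  have hdegT : (1 - Polynomial.C c * Polynomial.X ^ d).natDegree = d := by
    compute_degree!
    simp [hd0, hc]
  have hQ : Q.natDegree < j := by
    have hPQ0 : P * Q ≠ 0 := fun h => by rw [hPQ, h, Polynomial.natDegree_zero] at hdegT; omega
    have := Polynomial.natDegree_mul (left_ne_zero_of_mul hPQ0) (right_ne_zero_of_mul hPQ0)
    rw [← hPQ, hdegT, Polynomial.natDegree_prod_one_sub_C_mul_X _ fun i _ => hz0 i, card_univ,
      Fintype.card_fin] at this
    omega
  have hF : (∏ i, PowerSeries.mk (z i ^ ·)) * (P : ℂ⟦X⟧) = 1 := by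
    rw [← Polynomial.coeToPowerSeries.ringHom_apply, map_prod]
    simpa using PowerSeries.prod_mk_pow_mul_prod_one_sub_C_mul_X univ z
  simpa [PowerSeries.coeff_prod_fin] using
    PowerSeries.coeff_eq_zero_of_mul_eq_one_of_mul_eq_one_sub_C_mul_X_pow hF hPQ.symm hQ (by omega)

/-- Let `k ≥ 1`, `d ≥ k`, and let `z₁,…,z_k` be distinct complex numbers
with `z_i^d = c` for a common nonzero `c`. Then the complete homogeneous symmetric
polynomial `h_j(z₁,…,z_k) = Σ_{i₁+⋯+i_k=j} z₁^{i₁}⋯z_k^{i_k}` vanishes for every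
`j` with `d−k+1 ≤ j ≤ d−1`. -/
theorem stmt9 (k d : ℕ) (hk : 1 ≤ k) (hd : k ≤ d)
    (c : ℂ) (hc : c ≠ 0) (z : Fin k → ℂ) (hinj : Function.Injective z)
    (hz : ∀ i, z i ^ d = c)
    (j : ℕ) (hj1 : d - k + 1 ≤ j) (hj2 : j ≤ d - 1) :
    ∑ μ ∈ Finset.Nat.antidiagonalTuple k j, ∏ i : Fin k, z i ^ μ i = 0 :=
  stmt9_general k d c hc z hinj hz j hj1 hj2
end

section
/- Let f = ∏_{i=1}^k (y_i x + x_i y) = e₀ x^k + e₁ x^{k−1} y + ⋯ + e_k y^k in ℂ[x₁,y₁,…,x_k,y_k][x,y], where e_j = e_j(x₁,y₁,…,x_k,y_k) is the bihomogeneous elementary symmetric polynomial. For h ≥ 1 and a partition λ fitting in the k×h rectangle with conjugate λ' = (λ'₁,…,λ'_h) (padded with zeros), the h×h determinant det((e_{λ'_i + j − i})_{i,j=1}^h) equals ± e₀^{h−λ₁} s_λ(x₁,y₁,…,x_k,y_k), where s_λ is the bihomogeneous Schur polynomial and e_m := 0 for m < 0 or m > k. -/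
open MvPolynomial

noncomputable def aDet (k : ℕ) (l : Fin k → ℕ) : MvPolynomial (Fin k ⊕ Fin k) ℂ :=
  Matrix.det (Matrix.of fun i j : Fin k =>
    X (Sum.inl j) ^ l i * X (Sum.inr j) ^ (l ⟨0, i.pos⟩ - l i))

noncomputable def bialt (k : ℕ) (lam : Fin k → ℕ) : MvPolynomial (Fin k ⊕ Fin k) ℂ :=
  aDet k (fun i => lam i + (k - 1 - i.1))

noncomputable def eBih (k : ℕ) (j : ℤ) : MvPolynomial (Fin k ⊕ Fin k) ℂ :=
  if 0 ≤ j ∧ j ≤ (k : ℤ) then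
    ∑ A ∈ Finset.powersetCard j.toNat (Finset.univ : Finset (Fin k)),
      (∏ i ∈ A, X (Sum.inl i)) * ∏ i ∈ Aᶜ, X (Sum.inr i)
  else 0

/-!
Let `V` be the `(k + h) × k` matrix with entries `(-x_i)^c y_i^(k+h-1-c)` and `W` the banded
`(k + h) × h` matrix with entries `e_(k+j-c)`. Every column of `V` is orthogonal to every
column of `W`, because `∏ₜ (y_t x + x_t y) = Σₘ eₘ x^(k-m) y^m` vanishes at `(-x_i, y_i)`.
For such a pair, Jacobi's complementary-minor identity compares any two splittings of the
`k + h` rows into `k` and `h` rows. Split once into the rows `λᵢ + k - 1 - i` and their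
complement `{k + j - λ'_(j+1)}`, once in the same way for `λ = ∅`. The `k × k` minors of `V`
are `± e₀^(h-λ₁) a_(λ+δ)` and `± e₀^h a_δ`, the `h × h` minors of `W` are the dual
Jacobi–Trudi determinant and the unitriangular `e₀^h`. Cancelling `e₀^h a_δ ≠ 0` and
substituting `a_(λ+δ) = a_δ s_λ` gives the claim.
-/

namespace Matrix

variable {ι κ η R : Type*} [Fintype ι] [DecidableEq ι] [Fintype κ] [DecidableEq κ]
  [Fintype η] [DecidableEq η] [CommRing R]

/-- Jacobi's complementary-minor identity: both sides come from `det (Aᵀ * B)` for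
`A = [V | 1_(e' ∘ inr)]` and `B = [1_(e ∘ inl) | W]`. -/
theorem sign_mul_det_mul_det_of_transpose_mul_eq_zero (V : Matrix ι κ R) (W : Matrix ι η R)
    (hVW : Vᵀ * W = 0) (e e' : κ ⊕ η ≃ ι) :
    (Equiv.Perm.sign (e'.trans e.symm) : R) *
        ((V.submatrix (e ∘ Sum.inl) id).det * (W.submatrix (e' ∘ Sum.inr) id).det) =
      (V.submatrix (e' ∘ Sum.inl) id).det * (W.submatrix (e ∘ Sum.inr) id).det := by
  let A : Matrix ι (κ ⊕ η) R := fromCols V (of fun r j => if r = e' (.inr j) then 1 else 0)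
  let B : Matrix ι (κ ⊕ η) R := fromCols (of fun r i => if r = e (.inl i) then 1 else 0) W
  have hAB : Aᵀ * B = fromBlocks (V.submatrix (e ∘ Sum.inl) id)ᵀ 0
      (of fun j i => if e (.inl i) = e' (.inr j) then 1 else 0)
      (W.submatrix (e' ∘ Sum.inr) id) := by
    rw [transpose_fromCols, fromRows_mul_fromCols, hVW]
    congr 1 <;> ext <;> simp [mul_apply]
  have hA : A.submatrix e' id = fromBlocks (V.submatrix (e' ∘ Sum.inl) id) 0
      (V.submatrix (e' ∘ Sum.inr) id) 1 := by
    ext (_ | _) (_ | _) <;> simp [A, one_apply]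
  have hB : B.submatrix e id = fromBlocks 1 (W.submatrix (e ∘ Sum.inl) id) 0
      (W.submatrix (e ∘ Sum.inr) id) := by
    ext (_ | _) (_ | _) <;> simp [B, one_apply]
  have hperm : A.submatrix e' id = (A.submatrix e id).submatrix (e'.trans e.symm) id := by
    simp [submatrix_submatrix, Function.comp_def]
  have hsplit : (Aᵀ * B).det = (A.submatrix e id).det * (B.submatrix e id).det := by
    rw [← det_transpose (A.submatrix e id), ← det_mul, transpose_submatrix,
      submatrix_mul_equiv, submatrix_id_id]
  calc _ = (Equiv.Perm.sign (e'.trans e.symm) : R) * (Aᵀ * B).det := by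
        rw [hAB, det_fromBlocks_zero₁₂, det_transpose]
    _ = (A.submatrix e' id).det * (B.submatrix e id).det := by
        rw [hsplit, hperm, det_permute, mul_assoc]
    _ = _ := by
        rw [hA, hB, det_fromBlocks_zero₁₂, det_fromBlocks_zero₂₁, det_one, det_one, mul_one,
          one_mul]

end Matrix

open Finset Matrix

section

variable {k h : ℕ}

theorem eBih_of_neg {j : ℤ} (hj : j < 0) : eBih k j = 0 := by
  rw [eBih, if_neg (by omega)]

theorem eBih_of_lt {j : ℤ} (hj : (k : ℤ) < j) : eBih k j = 0 := by
  rw [eBih, if_neg (by omega)]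

theorem eBih_natCast {m : ℕ} (hm : m ≤ k) :
    eBih k m = ∑ A ∈ powersetCard m univ,
      (∏ i ∈ A, X (Sum.inl i)) * ∏ i ∈ Aᶜ, X (Sum.inr i) := by
  rw [eBih, if_pos (by omega), Int.toNat_natCast]

theorem eBih_zero : eBih k 0 = ∏ i, X (Sum.inr i) := by
  simpa using eBih_natCast (k := k) (Nat.zero_le k)

theorem eBih_zero_ne_zero : eBih k 0 ≠ 0 := by
  rw [eBih_zero]
  exact prod_ne_zero_iff.mpr fun i _ => X_ne_zero _

theorem prod_eq_sum_eBih (u v : MvPolynomial (Fin k ⊕ Fin k) ℂ) :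
    ∏ t, (X (Sum.inr t) * u + X (Sum.inl t) * v) =
      ∑ m ∈ range (k + 1), eBih k m * u ^ (k - m) * v ^ m := by
  simp_rw [add_comm (X (Sum.inr _) * u)]
  rw [prod_add, sum_powerset, card_univ, Fintype.card_fin]
  refine sum_congr rfl fun m hm => ?_
  rw [eBih_natCast (Nat.lt_succ_iff.mp (mem_range.mp hm)), sum_mul, sum_mul]
  refine sum_congr rfl fun A hA => ?_
  rw [mem_powersetCard_univ] at hA
  rw [prod_mul_distrib, prod_mul_distrib, prod_const, prod_const, ← compl_eq_univ_sdiff,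
    card_compl, Fintype.card_fin, hA]
  ring

def conjugatePart (lam : Fin k → ℕ) (v : ℕ) : ℕ := #{t | v ≤ lam t}

theorem conjugatePart_le (lam : Fin k → ℕ) (v : ℕ) : conjugatePart lam v ≤ k :=
  (card_filter_le _ _).trans_eq (card_fin k)

theorem conjugatePart_antitone (lam : Fin k → ℕ) : Antitone (conjugatePart lam) :=
  fun _ _ hvw => card_le_card fun _ ht => by
    simp only [mem_filter, mem_univ, true_and] at ht ⊢
    omega

theorem lt_conjugatePart_iff {lam : Fin k → ℕ} (hanti : Antitone lam) (v : ℕ) (i : Fin k) :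
    i.1 < conjugatePart lam v ↔ v ≤ lam i := by
  constructor
  · intro hi
    by_contra! hv
    have : univ.filter (fun t => v ≤ lam t) ⊆ Iio i := fun t ht => by
      simp only [mem_filter, mem_univ, true_and] at ht
      exact mem_Iio.mpr (lt_of_not_ge fun hit => (hv.trans_le (ht.trans (hanti hit))).false)
    exact absurd ((card_le_card this).trans_eq (Fin.card_Iio i)) (not_le.mpr hi)
  · intro hv
    have : Iic i ⊆ univ.filter (fun t => v ≤ lam t) := fun t ht =>
      mem_filter.mpr ⟨mem_univ t, hv.trans (hanti (mem_Iic.mp ht))⟩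
    exact Nat.lt_of_succ_le ((Fin.card_Iic i).symm.trans_le (card_le_card this))

def partRow {lam : Fin k → ℕ} (hlam : ∀ i, lam i ≤ h) (i : Fin k) : Fin (k + h) :=
  ⟨lam i + (k - 1 - i), by have := hlam i; omega⟩

def conjRow (lam : Fin k → ℕ) (j : Fin h) : Fin (k + h) :=
  ⟨k + j - conjugatePart lam (j + 1), by have := conjugatePart_le lam (j + 1); omega⟩

theorem partRow_strictAnti {lam : Fin k → ℕ} (hlam : ∀ i, lam i ≤ h)
    (hanti : Antitone lam) : StrictAnti (partRow hlam) := by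
  intro i i' hii'
  have := hanti hii'.le
  simp only [partRow, Fin.mk_lt_mk]
  omega

theorem conjRow_strictMono (lam : Fin k → ℕ) : StrictMono (conjRow (h := h) lam) := by
  intro j j' hjj'
  have := conjugatePart_antitone lam (by omega : j.1 + 1 ≤ j'.1 + 1)
  have := conjugatePart_le lam (j + 1)
  simp only [conjRow, Fin.mk_lt_mk]
  omega

theorem partRow_ne_conjRow {lam : Fin k → ℕ} (hlam : ∀ i, lam i ≤ h) (hanti : Antitone lam)
    (i : Fin k) (j : Fin h) : partRow hlam i ≠ conjRow lam j := by
  have hiff := lt_conjugatePart_iff hanti (j + 1) i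
  have := conjugatePart_le lam (j + 1)
  simp only [partRow, conjRow, ne_eq, Fin.mk.injEq]
  by_cases hj : j.1 + 1 ≤ lam i <;>
    simp only [hj, iff_true, iff_false, not_lt] at hiff <;> omega

/-- The two row sets partition `[0, k + h)` (Macdonald, *Symmetric functions*, I.(1.7)). -/
noncomputable def rowSplit {lam : Fin k → ℕ} (hlam : ∀ i, lam i ≤ h)
    (hanti : Antitone lam) : Fin k ⊕ Fin h ≃ Fin (k + h) :=
  Equiv.ofBijective (Sum.elim (partRow hlam) (conjRow lam)) <|
    (Fintype.bijective_iff_injective_and_card _).mpr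
      ⟨(partRow_strictAnti hlam hanti).injective.sumElim (conjRow_strictMono lam).injective
        (partRow_ne_conjRow hlam hanti), by simp⟩

variable (k h) in
noncomputable def bihomVandermonde :
    Matrix (Fin (k + h)) (Fin k) (MvPolynomial (Fin k ⊕ Fin k) ℂ) :=
  Matrix.of fun c i => (-X (Sum.inl i)) ^ c.1 * X (Sum.inr i) ^ (k + h - 1 - c.1)

variable (k h) in
noncomputable def eBihBand :
    Matrix (Fin (k + h)) (Fin h) (MvPolynomial (Fin k ⊕ Fin k) ℂ) :=
  Matrix.of fun c j => eBih k (k + j.1 - c.1)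

theorem transpose_bihomVandermonde_mul_eBihBand :
    (bihomVandermonde k h)ᵀ * eBihBand k h = 0 := by
  refine Matrix.ext fun i j => ?_
  set x : MvPolynomial (Fin k ⊕ Fin k) ℂ := -X (Sum.inl i)
  set y : MvPolynomial (Fin k ⊕ Fin k) ℂ := X (Sum.inr i)
  let g : ℕ → MvPolynomial (Fin k ⊕ Fin k) ℂ := fun c =>
    x ^ c * y ^ (k + h - 1 - c) * eBih k (k + j.1 - c)
  have hj := j.2
  have hsupp : Ico j.1 (k + j + 1) ⊆ range (k + h) := fun c hc => by
    simp only [mem_Ico, mem_range] at hc ⊢; omega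
  have hvanish : ∀ c ∈ range (k + h), c ∉ Ico j.1 (k + j + 1) → g c = 0 := fun c _ hc => by
    rw [mem_Ico, not_and_or, not_le, not_lt] at hc
    rcases hc with hc | hc
    · simp only [g, eBih_of_lt (by omega : (k : ℤ) < k + j.1 - c), mul_zero]
    · simp only [g, eBih_of_neg (by omega : (k : ℤ) + j.1 - c < 0), mul_zero]
  have hterm : ∀ m ∈ range (k + 1),
      g (k + j - m) = x ^ j.1 * y ^ (h - 1 - j) * (eBih k m * x ^ (k - m) * y ^ m) := by
    intro m hm
    have hm := mem_range.mp hm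
    simp only [g]
    rw [show (k : ℤ) + j.1 - ((k + j.1 - m : ℕ) : ℤ) = m by omega,
      show k + j.1 - m = j.1 + (k - m) by omega,
      show k + h - 1 - (j.1 + (k - m)) = (h - 1 - j) + m by omega, pow_add, pow_add]
    ring
  calc ((bihomVandermonde k h)ᵀ * eBihBand k h) i j = ∑ c ∈ range (k + h), g c := by
        simp only [mul_apply, transpose_apply, bihomVandermonde, eBihBand, of_apply]
        exact Fin.sum_univ_eq_sum_range g (k + h)
    _ = ∑ m ∈ range (k + 1), g (k + j - m) := by
        rw [← sum_subset hsupp hvanish, range_eq_Ico, sum_Ico_reflect g 0 (by omega),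
          show k + j.1 + 1 - (k + 1) = j.1 by omega, Nat.sub_zero]
    _ = x ^ j.1 * y ^ (h - 1 - j) * ∏ t, (X (Sum.inr t) * x + X (Sum.inl t) * y) := by
        rw [sum_congr rfl hterm, ← mul_sum, prod_eq_sum_eBih]
    _ = 0 := by
        rw [prod_eq_zero (mem_univ i) (by simp only [x, y]; ring), mul_zero]

theorem rowSplit_comp_inl {lam : Fin k → ℕ} (hlam : ∀ i, lam i ≤ h) (hanti : Antitone lam) :
    ⇑(rowSplit hlam hanti) ∘ Sum.inl = partRow hlam := rfl

theorem rowSplit_comp_inr {lam : Fin k → ℕ} (hlam : ∀ i, lam i ≤ h) (hanti : Antitone lam) :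
    ⇑(rowSplit hlam hanti) ∘ Sum.inr = conjRow lam := rfl

theorem det_bihomVandermonde_submatrix_partRow (hk : 0 < k) {lam : Fin k → ℕ}
    (hlam : ∀ i, lam i ≤ h) (hanti : Antitone lam) :
    ((bihomVandermonde k h).submatrix (partRow hlam) id).det =
      (-1) ^ (∑ i, (lam i + (k - 1 - i))) *
        (eBih k 0 ^ (h - lam ⟨0, hk⟩) * bialt k lam) := by
  rw [eBih_zero, ← prod_pow, ← prod_pow_eq_pow_sum, bialt, aDet, ← det_mul_row,
    ← det_mul_column]
  congr 1
  refine Matrix.ext fun i j => ?_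
  have : lam i ≤ lam ⟨0, hk⟩ := hanti (Nat.zero_le _)
  have := hlam ⟨0, hk⟩
  simp only [bihomVandermonde, partRow, submatrix_apply, id, of_apply]
  rw [neg_pow,
    show k + h - 1 - (lam i + (k - 1 - i)) =
      (h - lam ⟨0, hk⟩) + (lam ⟨0, hk⟩ + (k - 1 - 0) - (lam i + (k - 1 - i))) by omega,
    pow_add]
  ring

theorem eBihBand_submatrix_conjRow (lam : Fin k → ℕ) :
    (eBihBand k h).submatrix (conjRow lam) id =
      of fun i j : Fin h => eBih k (conjugatePart lam (i + 1) + j - i) := by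
  refine Matrix.ext fun i j => ?_
  have := conjugatePart_le lam (i + 1)
  simp only [eBihBand, conjRow, submatrix_apply, id, of_apply]
  congr 1
  omega

theorem det_eBihBand_submatrix_conjRow_zero :
    ((eBihBand k h).submatrix (conjRow fun _ => 0) id).det = eBih k 0 ^ h := by
  have hconj : ∀ v, conjugatePart (fun _ : Fin k => 0) (v + 1) = 0 := fun v => by
    simp [conjugatePart]
  rw [det_of_isUpperTriangular, prod_congr rfl fun i _ => ?diag, prod_const, card_univ,
    Fintype.card_fin]
  case diag => simp [eBihBand, conjRow, hconj]
  intro i j hji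
  simp only [eBihBand, conjRow, hconj, submatrix_apply, id, of_apply]
  exact eBih_of_neg (by simp only [id] at hji; omega)

theorem bialt_zero_ne_zero : bialt k (fun _ => 0) ≠ 0 := by
  intro h0
  set v : Fin k → ℂ := fun j => (j : ℕ)
  have hv : Function.Injective v := Nat.cast_injective.comp Fin.val_injective
  have hdet := congrArg (eval (Sum.elim v 1)) h0
  have hM : (eval (Sum.elim v 1)).mapMatrix (of fun i j : Fin k =>
      X (Sum.inl j) ^ (0 + (k - 1 - i)) *
        X (Sum.inr j) ^ (0 + (k - 1 - 0) - (0 + (k - 1 - i)))) =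
      (vandermonde v)ᵀ.submatrix Fin.revPerm id := by
    refine Matrix.ext fun i j => ?_
    simp [vandermonde, Fin.val_rev, Nat.sub_sub, add_comm]
  rw [bialt, aDet, RingHom.map_det, map_zero, hM, det_permute, det_transpose] at hdet
  exact mul_ne_zero (by simp) (det_vandermonde_ne_zero_iff.mpr hv) hdet

theorem eq_or_eq_neg_of_mul_eq {R : Type*} [CommRing R] [NoZeroDivisors R] {a b x y : R}
    (ha : a * a = 1) (hb : b * b = 1) (h : a * x = b * y) : y = x ∨ y = -x := by
  have hy : y = a * b * x := by linear_combination (-b) * h - y * hb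
  have hab : a * b * (a * b) = 1 := by linear_combination b * b * ha + hb
  rcases mul_self_eq_one_iff.mp hab with hab | hab
  · left; rw [hy, hab, one_mul]
  · right; rw [hy, hab, neg_one_mul]

end

/-- For a partition `λ` fitting in the `k×h` rectangle with conjugate
`λ' = (λ'₁,…,λ'_h)` (where `λ'_i = #{j : λ_j ≥ i}`), the `h×h` determinant
`det((e_{λ'_i + j − i})_{i,j=1}^h)` equals `± e₀^{h−λ₁} s_λ`, where `s_λ` is the
bihomogeneous Schur polynomial (encoded by `a_{(k−1,…,0)} · s = a_{(λ+δ)}`) and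
`e₀ = y₁⋯y_k`. -/
theorem stmt14 (k h : ℕ) (hk : 1 ≤ k)
    (lam : Fin k → ℕ) (hanti : Antitone lam) (hfit : lam ⟨0, by omega⟩ ≤ h)
    (s : MvPolynomial (Fin k ⊕ Fin k) ℂ)
    (hs : bialt k (fun _ => 0) * s = bialt k lam) :
    Matrix.det (Matrix.of fun i j : Fin h =>
        eBih k ((((Finset.univ.filter (fun t : Fin k => i.1 + 1 ≤ lam t)).card : ℤ)
          + j.1) - i.1)) =
      eBih k 0 ^ (h - lam ⟨0, by omega⟩) * s ∨
    Matrix.det (Matrix.of fun i j : Fin h =>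
        eBih k ((((Finset.univ.filter (fun t : Fin k => i.1 + 1 ≤ lam t)).card : ℤ)
          + j.1) - i.1)) =
      - (eBih k 0 ^ (h - lam ⟨0, by omega⟩) * s) := by
  have hlam : ∀ i, lam i ≤ h := fun i => (hanti (Nat.zero_le i.1)).trans hfit
  have key := sign_mul_det_mul_det_of_transpose_mul_eq_zero _ _
    transpose_bihomVandermonde_mul_eBihBand (rowSplit hlam hanti)
    (rowSplit (fun _ => Nat.zero_le h) antitone_const)
  simp only [rowSplit_comp_inl, rowSplit_comp_inr] at key
  rw [det_bihomVandermonde_submatrix_partRow (by omega) hlam hanti,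
    det_bihomVandermonde_submatrix_partRow (by omega) _ antitone_const,
    det_eBihBand_submatrix_conjRow_zero, eBihBand_submatrix_conjRow, ← hs, Nat.sub_zero] at key
  unfold conjugatePart at key
  generalize Equiv.Perm.sign (_ : Equiv.Perm (Fin k ⊕ Fin h)) = σ at key
  refine eq_or_eq_neg_of_mul_eq
    (a := ((σ : ℤ) : MvPolynomial (Fin k ⊕ Fin k) ℂ) * (-1) ^ ∑ i, (lam i + (k - 1 - i)))
    (b := (-1) ^ ∑ i : Fin k, (0 + (k - 1 - i))) ?_ ?_ ?_
  · rw [mul_mul_mul_comm, ← Int.cast_mul, ← Units.val_mul, Int.units_mul_self, ← mul_pow]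
    simp
  · rw [← mul_pow, neg_one_mul, neg_neg, one_pow]
  · refine mul_left_cancel₀
      (mul_ne_zero (pow_ne_zero h eBih_zero_ne_zero) bialt_zero_ne_zero) ?_
    linear_combination key
end

section
/- For partitions λ with at most k−1 (nonzero) parts and λ₁ = m fixed (m ≥ 1), the ideal of ℂ[x₁,…,x_k] generated by all Schur polynomials S_λ with λ₁ = m and at most k−1 parts equals the ideal generated by the complete homogeneous symmetric polynomials h_m, h_{m+1}, …, h_{m+k−2}. -/
open MvPolynomial

/-- The complete homogeneous symmetric polynomial `h_j` in `k` variables. -/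
noncomputable def hPoly (k j : ℕ) : MvPolynomial (Fin k) ℂ :=
  ∑ μ ∈ Finset.Nat.antidiagonalTuple k j, ∏ i : Fin k, X i ^ μ i

/-- `h_j` for an integer index, vanishing for negative `j`. -/
noncomputable def hPolyZ (k : ℕ) (j : ℤ) : MvPolynomial (Fin k) ℂ :=
  if 0 ≤ j then hPoly k j.toNat else 0

/-- The Schur polynomial `S_λ` in `k` variables, via the first Jacobi–Trudi formula
`S_λ = det((h_{λ_i + j − i})_{i,j=1}^k)`. -/
noncomputable def schurPoly (k : ℕ) (lam : Fin k → ℕ) : MvPolynomial (Fin k) ℂ :=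
  Matrix.det (Matrix.of fun i j : Fin k => hPolyZ k (((lam i : ℤ) + j.1) - i.1))

/-!
Both inclusions are read off the Jacobi–Trudi matrix `(h_{λ_i + j - i})`, using only `h_0 = 1`
and `h_j = 0` for `j < 0`; the argument therefore runs for an arbitrary sequence `H : ℤ → R`.

If `λ_k = 0`, the last row of the matrix is `(0, …, 0, 1)`, so `S_λ` is the Jacobi–Trudi
determinant of `(λ_1, …, λ_{k-1})`, whose first row is `h_m, …, h_{m+k-2}`; expanding along
that row puts `S_λ` in the ideal of these.

Conversely, for the hook `(m, 1^r)` the first column is `(h_m, 1, 0, …, 0)`, and expanding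
along it gives `S_{(m,1^r)} ≡ (-1)^r h_{m+r}` modulo `(h_m, …, h_{m+r-1})`. Induction on `r`
recovers `h_{m+r}` for `r ≤ k - 2`, the hooks that still have `λ_k = 0`.
-/

open Matrix

namespace Matrix

variable {R : Type*} [CommRing R]

theorem det_mem_span_range_row_zero {n : ℕ} (A : Matrix (Fin (n + 1)) (Fin (n + 1)) R) :
    A.det ∈ Ideal.span (Set.range (A 0)) := by
  rw [det_succ_row_zero]
  exact Ideal.sum_mem _ fun j _ =>
    Ideal.mul_mem_right _ _ (Ideal.mul_mem_left _ _ (Ideal.subset_span ⟨j, rfl⟩))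

theorem det_eq_det_submatrix_castSucc {n : ℕ} (A : Matrix (Fin (n + 1)) (Fin (n + 1)) R)
    (hA : ∀ j : Fin n, A (Fin.last n) j.castSucc = 0) (hlast : A (Fin.last n) (Fin.last n) = 1) :
    A.det = (A.submatrix Fin.castSucc Fin.castSucc).det := by
  rw [det_succ_row A (Fin.last n), Fin.sum_univ_castSucc]
  simp [hA, hlast, ← two_mul, pow_mul]

theorem det_succ_succ_column_zero {n : ℕ} (A : Matrix (Fin (n + 2)) (Fin (n + 2)) R)
    (hA : ∀ i : Fin n, A i.succ.succ 0 = 0) :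
    A.det = A 0 0 * (A.submatrix Fin.succ Fin.succ).det
      - A 1 0 * (A.submatrix (Fin.succAbove 1) Fin.succ).det := by
  rw [det_succ_column_zero, Fin.sum_univ_succ, Fin.sum_univ_succ]
  simp [hA]
  ring

end Matrix

def hook (a r i : ℕ) : ℕ := if i = 0 then a else if i ≤ r then 1 else 0

theorem antitone_hook {a : ℕ} (ha : 1 ≤ a) (r : ℕ) : Antitone (hook a r) := by
  intro i j hij
  grind [hook]

theorem hook_succ_succ (a r i : ℕ) : hook a (r + 1) (i + 1) = hook 1 r i := by
  grind [hook]

section JacobiTrudi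

variable {R : Type*} (H : ℤ → R)

def jacobiTrudi {n : ℕ} (lam : Fin n → ℕ) : Matrix (Fin n) (Fin n) R :=
  of fun i j => H ((lam i : ℤ) + j.1 - i.1)

theorem jacobiTrudi_apply_zero {n : ℕ} (lam : Fin (n + 1) → ℕ) (j : Fin (n + 1)) :
    jacobiTrudi H lam 0 j = H ↑(lam 0 + j.1) := by
  simp [jacobiTrudi]

theorem jacobiTrudi_submatrix_succ {n : ℕ} (lam : Fin (n + 1) → ℕ) :
    (jacobiTrudi H lam).submatrix Fin.succ Fin.succ = jacobiTrudi H (lam ∘ Fin.succ) := by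
  ext i j
  simp only [jacobiTrudi, submatrix_apply, of_apply, Fin.val_succ, Function.comp_apply]
  congr 1
  push_cast
  ring

theorem jacobiTrudi_hook_submatrix_succAbove_one (n a r : ℕ) :
    (jacobiTrudi H fun i : Fin (n + 2) => hook a (r + 1) i).submatrix (Fin.succAbove 1) Fin.succ =
      jacobiTrudi H fun i : Fin (n + 1) => hook (a + 1) r i := by
  ext i j
  refine Fin.cases ?_ (fun i => ?_) i
  · simp [jacobiTrudi, hook]
    ring_nf
  · simp only [jacobiTrudi, of_apply, submatrix_apply, Fin.one_succAbove_succ, Fin.val_succ]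
    congr 1
    grind [hook]

variable [CommRing R]

theorem det_jacobiTrudi_mem_span {n : ℕ} (lam : Fin (n + 1) → ℕ) :
    (jacobiTrudi H lam).det ∈
      Ideal.span (Set.range fun j : Fin (n + 1) => H ↑(lam 0 + j.1)) := by
  rw [← funext (jacobiTrudi_apply_zero H lam)]
  exact det_mem_span_range_row_zero _

theorem det_jacobiTrudi_of_last_eq_zero (h0 : H 0 = 1) (hneg : ∀ j < 0, H j = 0) {n : ℕ}
    (lam : Fin (n + 1) → ℕ) (hlam : lam (Fin.last n) = 0) :
    (jacobiTrudi H lam).det = (jacobiTrudi H (lam ∘ Fin.castSucc)).det := by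
  refine det_eq_det_submatrix_castSucc _ (fun j => hneg _ ?_) ?_
  · simp [hlam]
  · simp [jacobiTrudi, hlam, h0]

theorem det_jacobiTrudi_hook_zero (h0 : H 0 = 1) (hneg : ∀ j < 0, H j = 0) (n a : ℕ) :
    (jacobiTrudi H fun i : Fin (n + 1) => hook a 0 i).det = H a := by
  rw [det_of_isUpperTriangular, Fin.prod_univ_succ]
  · simp [jacobiTrudi, hook, h0]
  · intro i j hij
    apply hneg
    have : (j : ℕ) < i := hij
    simp only [hook]
    split_ifs <;> omega

theorem det_jacobiTrudi_hook_succ (h0 : H 0 = 1) (hneg : ∀ j < 0, H j = 0) (n a r : ℕ) :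
    (jacobiTrudi H fun i : Fin (n + 2) => hook a (r + 1) i).det =
      H a * (jacobiTrudi H fun i : Fin (n + 1) => hook 1 r i).det
        - (jacobiTrudi H fun i : Fin (n + 1) => hook (a + 1) r i).det := by
  have hcol : (fun i : Fin (n + 2) => hook a (r + 1) i) ∘ Fin.succ =
      fun i : Fin (n + 1) => hook 1 r i :=
    funext fun i => hook_succ_succ a r i
  rw [det_succ_succ_column_zero, jacobiTrudi_submatrix_succ, hcol,
    jacobiTrudi_hook_submatrix_succAbove_one]
  · simp [jacobiTrudi, hook, h0]
  · intro i
    apply hneg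
    simp only [Fin.val_succ, Fin.val_zero]
    grind [hook]

theorem det_jacobiTrudi_hook_sub_mem (h0 : H 0 = 1) (hneg : ∀ j < 0, H j = 0)
    (r : ℕ) {n : ℕ} (a : ℕ) (hr : r < n) :
    (jacobiTrudi H fun i : Fin n => hook a r i).det - (-1) ^ r * H ↑(a + r) ∈
      Ideal.span (Set.range fun i : Fin r => H ↑(a + i)) := by
  induction r generalizing n a with
  | zero =>
    obtain ⟨n, rfl⟩ := Nat.exists_eq_succ_of_ne_zero hr.ne'
    simp [det_jacobiTrudi_hook_zero H h0 hneg]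
  | succ r ih =>
    rcases n with _ | _ | n
    · omega
    · omega
    · rw [det_jacobiTrudi_hook_succ H h0 hneg]
      have hfirst : H a * (jacobiTrudi H fun i : Fin (n + 1) => hook 1 r i).det ∈
          Ideal.span (Set.range fun i : Fin (r + 1) => H ↑(a + i)) :=
        Ideal.mul_mem_right _ _ (Ideal.subset_span ⟨0, rfl⟩)
      have hshift : (Set.range fun i : Fin r => H ↑(a + 1 + i)) ⊆
          Set.range fun i : Fin (r + 1) => H ↑(a + i) := by
        rintro _ ⟨i, rfl⟩
        exact ⟨i.succ, by simp [add_assoc, add_comm 1]⟩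
      have hrest := Ideal.span_mono hshift (ih (a + 1) (by omega : r < n + 1))
      convert Ideal.sub_mem _ hfirst hrest using 1
      rw [show a + (r + 1) = a + 1 + r by ring]
      ring

theorem mem_of_det_jacobiTrudi_hook_mem (h0 : H 0 = 1) (hneg : ∀ j < 0, H j = 0)
    {I : Ideal R} {n a r : ℕ} (hr : r < n)
    (hI : ∀ s ≤ r, (jacobiTrudi H fun i : Fin n => hook a s i).det ∈ I) :
    H ↑(a + r) ∈ I := by
  induction r using Nat.strong_induction_on with
  | _ r ih =>
  have hspan : Ideal.span (Set.range fun i : Fin r => H ↑(a + i)) ≤ I :=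
    Ideal.span_le.2 <| Set.range_subset_iff.2 fun i =>
      ih i i.2 (by omega) fun s hs => hI s (by omega)
  have hsign := I.sub_mem (hI r le_rfl) (hspan (det_jacobiTrudi_hook_sub_mem H h0 hneg r a hr))
  rw [sub_sub_cancel] at hsign
  exact (I.unit_mul_mem_iff_mem (isUnit_neg_one.pow r)).1 hsign

end JacobiTrudi

theorem hPoly_zero (k : ℕ) : hPoly k 0 = 1 := by
  simp [hPoly, Finset.Nat.antidiagonalTuple_zero_right]

theorem hPolyZ_zero (k : ℕ) : hPolyZ k 0 = 1 := by
  simp [hPolyZ, hPoly_zero]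

theorem hPolyZ_of_neg (k : ℕ) (j : ℤ) (hj : j < 0) : hPolyZ k j = 0 := by
  simp [hPolyZ, not_le.2 hj]

theorem hPolyZ_natCast (k j : ℕ) : hPolyZ k j = hPoly k j := by
  simp [hPolyZ]

theorem schurPoly_eq_det_jacobiTrudi (k : ℕ) (lam : Fin k → ℕ) :
    schurPoly k lam = (jacobiTrudi (hPolyZ k) lam).det :=
  rfl

theorem schurPoly_mem_span_hPoly {n m : ℕ} (lam : Fin (n + 1) → ℕ) (hlam0 : lam 0 = m)
    (hlast : lam (Fin.last n) = 0) (hm : m ≠ 0) :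
    schurPoly (n + 1) lam ∈ Ideal.span (hPoly (n + 1) '' Set.Ico m (m + n)) := by
  cases n with
  | zero => exact absurd (hlam0.symm.trans hlast) hm
  | succ n =>
    rw [schurPoly_eq_det_jacobiTrudi,
      det_jacobiTrudi_of_last_eq_zero _ (hPolyZ_zero _) (hPolyZ_of_neg _) lam hlast]
    refine Ideal.span_mono ?_ (det_jacobiTrudi_mem_span _ _)
    rintro _ ⟨j, rfl⟩
    exact ⟨m + j, ⟨by omega, by omega⟩, by rw [← hlam0]; exact (hPolyZ_natCast _ _).symm⟩

theorem hPoly_add_mem_of_schurPoly_hook_mem {n : ℕ} {I : Ideal (MvPolynomial (Fin (n + 1)) ℂ)}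
    {m r : ℕ} (hr : r < n)
    (hI : ∀ s ≤ r, schurPoly (n + 1) (fun i => hook m s i) ∈ I) :
    hPoly (n + 1) (m + r) ∈ I := by
  rw [← hPolyZ_natCast]
  exact mem_of_det_jacobiTrudi_hook_mem _ (hPolyZ_zero _) (hPolyZ_of_neg _) (by omega) hI

/-- For fixed `m ≥ 1`, the ideal of `ℂ[x₁,…,x_k]` generated by all Schur
polynomials `S_λ` with `λ₁ = m` and at most `k−1` parts equals the ideal generated by
the complete homogeneous symmetric polynomials `h_m, h_{m+1}, …, h_{m+k−2}`. -/
theorem stmt15 (k m : ℕ) (hk : 1 ≤ k) (hm : 1 ≤ m) :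
    Ideal.span {p : MvPolynomial (Fin k) ℂ | ∃ lam : Fin k → ℕ,
        Antitone lam ∧ lam ⟨0, by omega⟩ = m ∧ lam ⟨k - 1, by omega⟩ = 0 ∧
        p = schurPoly k lam} =
    Ideal.span {p : MvPolynomial (Fin k) ℂ | ∃ j : ℕ,
        m ≤ j ∧ j ≤ m + k - 2 ∧ p = hPoly k j} := by
  obtain ⟨n, rfl⟩ : ∃ n, k = n + 1 := ⟨k - 1, by omega⟩
  apply le_antisymm <;> rw [Ideal.span_le]
  · rintro _ ⟨lam, -, hlam0, hlast, rfl⟩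
    refine Ideal.span_mono ?_ (schurPoly_mem_span_hPoly lam hlam0 hlast (by omega))
    rintro _ ⟨j, ⟨hmj, hjm⟩, rfl⟩
    exact ⟨j, hmj, by omega, rfl⟩
  · rintro _ ⟨j, hmj, hjm, rfl⟩
    obtain ⟨r, rfl⟩ := Nat.exists_eq_add_of_le hmj
    refine hPoly_add_mem_of_schurPoly_hook_mem (by omega) fun s hs => Ideal.subset_span ?_
    exact ⟨_, fun i j hij => antitone_hook hm s hij, by simp [hook], by grind [hook], rfl⟩
end

section
/- Let I ⊆ 𝕜[x₁,…,x_r] be a homogeneous ideal and N a monomial ideal. For every degree d, the rank of the matroid Trop((I+N)_d) equals r_d(Mon_d) − r_d(N_d), where r_d is the rank function of Trop(I_d), Mon_d is the set of all degree-d monomials, and N_d ⊆ Mon_d is the set of degree-d monomials in N. Equivalently, Trop(I+N) = Trop(I) ÷ N (looped contraction). -/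
open MvPolynomial

/-- The set of monomials of degree `d` in `r` variables (with coefficient `1`). -/
def monSet (𝕜 : Type*) [Field 𝕜] (r d : ℕ) : Set (MvPolynomial (Fin r) 𝕜) :=
  {p | ∃ μ : Fin r →₀ ℕ, (μ.sum fun _ e => e) = d ∧ p = monomial μ (1 : 𝕜)}

/-- The rank function of `Trop(I_d)`:
`r_d(S) = dim Span(S) − dim (I_d ∩ Span(S))`, i.e. `dim (Span(S)/(I_d ∩ Span(S)))`. -/
noncomputable def tropIdealRank {𝕜 : Type*} [Field 𝕜] {r : ℕ}
    (I : Ideal (MvPolynomial (Fin r) 𝕜)) (d : ℕ)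
    (S : Set (MvPolynomial (Fin r) 𝕜)) : ℕ :=
  Module.finrank 𝕜 ↥(Submodule.span 𝕜 S) -
    Module.finrank 𝕜
      ↥((Submodule.restrictScalars 𝕜 I ⊓ homogeneousSubmodule (Fin r) 𝕜 d) ⊓
          Submodule.span 𝕜 S)

/-!
In degree `d`, homogeneity of `I` and the monomial property of `N` give
`(I + N)_d = I_d + N_d`, and `N_d` is spanned by the degree-`d` monomials it contains.
For a fixed subspace `A`, the rank function `W ↦ dim W - dim (A ∩ W)` satisfies
`r_{A+U}(W) = r_A(U + W) - r_A(U)` by the dimension formula for sums and intersections;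
with `A = I_d` and `U = N_d` this is the looped contraction `Trop(I) ÷ N`.
-/

section MonomialSpan

variable {𝕜 : Type*} [Field 𝕜]

theorem homogeneousComponent_mem_of_monomial_mem {σ : Type*}
    {M : Submodule 𝕜 (MvPolynomial σ 𝕜)} (hM : ∀ p ∈ M, ∀ μ ∈ p.support, monomial μ 1 ∈ M)
    {p : MvPolynomial σ 𝕜} (hp : p ∈ M) (n : ℕ) : homogeneousComponent n p ∈ M := by
  rw [homogeneousComponent_apply]
  refine M.sum_mem fun μ hμ => ?_
  rw [← mul_one (coeff μ p), ← smul_eq_mul, ← smul_monomial]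
  exact M.smul_mem _ (hM p hp μ (Finset.mem_of_mem_filter μ hμ))

theorem span_monSet_inter {r : ℕ} {M : Submodule 𝕜 (MvPolynomial (Fin r) 𝕜)}
    (hM : ∀ p ∈ M, ∀ μ ∈ p.support, monomial μ 1 ∈ M) (d : ℕ) :
    Submodule.span 𝕜 {p ∈ monSet 𝕜 r d | p ∈ M} = M ⊓ homogeneousSubmodule (Fin r) 𝕜 d := by
  apply le_antisymm
  · rw [Submodule.span_le]
    rintro _ ⟨⟨μ, hμ, rfl⟩, hμM⟩
    exact ⟨hμM, isHomogeneous_monomial _ hμ⟩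
  · rintro p ⟨hpM, hpd⟩
    rw [p.as_sum]
    refine Submodule.sum_mem _ fun μ hμ => ?_
    have hμd : μ.degree = d := by
      rw [Finsupp.degree_eq_weight_one]; exact hpd (mem_support_iff.mp hμ)
    rw [← mul_one (coeff μ p), ← smul_eq_mul, ← smul_monomial]
    exact Submodule.smul_mem _ _ (Submodule.subset_span ⟨⟨μ, hμd, rfl⟩, hM p hpM μ hμ⟩)

theorem span_monSet (r d : ℕ) :
    Submodule.span 𝕜 (monSet 𝕜 r d) = homogeneousSubmodule (Fin r) 𝕜 d := by
  simpa using span_monSet_inter (M := ⊤) (by simp) d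

end MonomialSpan

instance {σ 𝕜 : Type*} [Field 𝕜] [Finite σ] (d : ℕ) :
    FiniteDimensional 𝕜 (homogeneousSubmodule σ 𝕜 d) :=
  (Submodule.fg_iff_finiteDimensional _).mp (homogeneousSubmodule_fg σ 𝕜 d)

theorem sup_inf_homogeneousSubmodule {σ R : Type*} [CommSemiring R]
    {A B : Submodule R (MvPolynomial σ R)} {d : ℕ}
    (hA : ∀ p ∈ A, homogeneousComponent d p ∈ A) (hB : ∀ p ∈ B, homogeneousComponent d p ∈ B) :
    (A ⊔ B) ⊓ homogeneousSubmodule σ R d =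
      A ⊓ homogeneousSubmodule σ R d ⊔ B ⊓ homogeneousSubmodule σ R d := by
  refine le_antisymm ?_ (sup_le (inf_le_inf_right _ le_sup_left) (inf_le_inf_right _ le_sup_right))
  rintro _ ⟨hp, hpd⟩
  obtain ⟨a, ha, b, hb, rfl⟩ := Submodule.mem_sup.mp hp
  have hab : homogeneousComponent d a + homogeneousComponent d b = a + b := by
    rw [← map_add]; exact homogeneousComponent_of_mem hpd |>.trans (if_pos rfl)
  exact hab ▸ Submodule.add_mem_sup ⟨hA a ha, homogeneousComponent_mem d a⟩
    ⟨hB b hb, homogeneousComponent_mem d b⟩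

theorem finrank_sub_finrank_sup_inf {K V : Type*} [Field K] [AddCommGroup V] [Module K V]
    (A U W : Submodule K V) [FiniteDimensional K A] [FiniteDimensional K U]
    [FiniteDimensional K W] :
    Module.finrank K W - Module.finrank K ↥((A ⊔ U) ⊓ W) =
      (Module.finrank K ↥(U ⊔ W) - Module.finrank K ↥(A ⊓ (U ⊔ W))) -
        (Module.finrank K U - Module.finrank K ↥(A ⊓ U)) := by
  have e1 := Submodule.finrank_sup_add_finrank_inf_eq (A ⊔ U) W
  have e2 := Submodule.finrank_sup_add_finrank_inf_eq A (U ⊔ W)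
  have e3 := Submodule.finrank_sup_add_finrank_inf_eq A U
  rw [← sup_assoc] at e2
  have m1 := Submodule.finrank_mono (le_sup_left : A ≤ A ⊔ U)
  have m2 := Submodule.finrank_mono (le_sup_left : A ⊔ U ≤ A ⊔ U ⊔ W)
  omega

theorem tropIdealRank_sup_monomialIdeal {𝕜 : Type*} [Field 𝕜] {r : ℕ}
    {I N : Ideal (MvPolynomial (Fin r) 𝕜)} {d : ℕ}
    (hI : ∀ p ∈ I, homogeneousComponent d p ∈ I)
    (hN : ∀ p ∈ N, ∀ μ ∈ p.support, monomial μ (1 : 𝕜) ∈ N)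
    {T : Set (MvPolynomial (Fin r) 𝕜)} (hT : T ⊆ monSet 𝕜 r d) :
    tropIdealRank (I ⊔ N) d T =
      tropIdealRank I d ({p ∈ monSet 𝕜 r d | p ∈ N} ∪ T) -
        tropIdealRank I d {p ∈ monSet 𝕜 r d | p ∈ N} := by
  have hNd : Submodule.span 𝕜 {p ∈ monSet 𝕜 r d | p ∈ N} =
      N.restrictScalars 𝕜 ⊓ homogeneousSubmodule (Fin r) 𝕜 d :=
    span_monSet_inter (M := N.restrictScalars 𝕜) hN d
  have hsup := sup_inf_homogeneousSubmodule (A := I.restrictScalars 𝕜)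
    (B := N.restrictScalars 𝕜) hI
    fun _ hp => homogeneousComponent_mem_of_monomial_mem (M := N.restrictScalars 𝕜) hN hp d
  have : FiniteDimensional 𝕜 (Submodule.span 𝕜 T) :=
    Submodule.finiteDimensional_of_le (span_monSet (𝕜 := 𝕜) r d ▸ Submodule.span_mono hT)
  unfold tropIdealRank
  rw [Submodule.restrictScalars_sup, hsup, Submodule.span_union, hNd]
  exact finrank_sub_finrank_sup_inf _ _ _

/-- Let `I` be a homogeneous ideal and `N` a monomial ideal in
`𝕜[x₁,…,x_r]`. For every `d`, the rank of `Trop((I+N)_d)` equals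
`r_d(Mon_d) − r_d(N_d)`, where `r_d` is the rank function of `Trop(I_d)` and `N_d` is
the set of degree-`d` monomials in `N`; moreover `Trop(I+N) = Trop(I) ÷ N` (looped
contraction): for any `T ⊆ Mon_d`, the `Trop((I+N)_d)`-rank of `T` is
`r_d(N_d ∪ T) − r_d(N_d)`. -/
theorem stmt16 {𝕜 : Type*} [Field 𝕜] (r : ℕ)
    (I N : Ideal (MvPolynomial (Fin r) 𝕜))
    (hI : ∀ p ∈ I, ∀ n : ℕ, homogeneousComponent n p ∈ I)
    (hN : ∀ p ∈ N, ∀ μ ∈ p.support, (monomial μ (1 : 𝕜)) ∈ N)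
    (d : ℕ) :
    (tropIdealRank (I ⊔ N) d (monSet 𝕜 r d) =
      tropIdealRank I d (monSet 𝕜 r d) -
        tropIdealRank I d {p ∈ monSet 𝕜 r d | p ∈ N}) ∧
    (∀ T ⊆ monSet 𝕜 r d,
      tropIdealRank (I ⊔ N) d T =
        tropIdealRank I d ({p ∈ monSet 𝕜 r d | p ∈ N} ∪ T) -
          tropIdealRank I d {p ∈ monSet 𝕜 r d | p ∈ N}) := by
  have contraction {T} (hT : T ⊆ monSet 𝕜 r d) :=
    tropIdealRank_sup_monomialIdeal (fun p hp => hI p hp d) hN hT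
  refine ⟨?_, fun T hT => contraction hT⟩
  simpa only [Set.union_eq_self_of_subset_left (Set.sep_subset _ _)]
    using contraction subset_rfl
end
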